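/- arXiv:1011.0827 — 4 statements merged into one kernel-verified Lean document; each statement's English description precedes it below -/
import Mathlib

section
/- Let Γ be a finite Abelian group and S ⊆ Γ\{1} an inverse-closed generating set. Then rc(C(Γ,S)) ≤ min over minimal generating sets S* ⊆ S of Γ of the sum over a ∈ S* of ⌈|a|/2⌉, where |a| denotes the order of a. -/
open SimpleGraph Finset

/-- An edge-coloring with colors `< k` such that every two vertices are joined by a
path whose edge colors are pairwise distinct. -/
def RainbowConnected {V : Type*} (G : SimpleGraph V) (k : ℕ) : Prop :=
  ∃ c : Sym2 V → ℕ, (∀ e ∈ G.edgeSet, c e < k) ∧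
    ∀ u v : V, ∃ p : G.Walk u v, p.IsPath ∧ (p.edges.map c).Nodup

/-- As above, but the rainbow path must be a geodesic. -/
def StrongRainbowConnected {V : Type*} (G : SimpleGraph V) (k : ℕ) : Prop :=
  ∃ c : Sym2 V → ℕ, (∀ e ∈ G.edgeSet, c e < k) ∧
    ∀ u v : V, ∃ p : G.Walk u v, p.IsPath ∧ p.length = G.dist u v ∧ (p.edges.map c).Nodup

/-- The rainbow connection number. -/
noncomputable def rc {V : Type*} (G : SimpleGraph V) : ℕ := sInf {k | RainbowConnected G k}

/-- The strong rainbow connection number. -/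
noncomputable def src {V : Type*} (G : SimpleGraph V) : ℕ := sInf {k | StrongRainbowConnected G k}
/-- The Cayley graph of a group `Γ` with connection set `S`: `x ~ y` iff `x * y⁻¹ ∈ S`
(symmetrized; for `S` inverse-closed with `1 ∉ S` this is the usual Cayley graph). -/
def cayley {Γ : Type*} [Group Γ] (S : Set Γ) : SimpleGraph Γ :=
  SimpleGraph.fromRel (fun x y => x * y⁻¹ ∈ S)

/-!
The edges `{x, x * a}` of a generator `a` form cycles of length `|a|`, one through each coset of
`⟨a⟩`. Colouring the `i`-th edge of each such cycle by `(a, i mod ⌈|a|/2⌉)` uses `⌈|a|/2⌉`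
colours and makes every run of at most `⌊|a|/2⌋` consecutive edges rainbow. Since `Γ` is Abelian,
every `u⁻¹ v` is a product `∏_{a ∈ T} a ^ k_a` with `|k_a| ≤ ⌊|a|/2⌋`, so walking from `u` along
one generator at a time gives a rainbow walk to `v`, and its bypass a rainbow path. Minimality of
`T` is what makes the colouring well defined: no edge is generated by both `a` and `a⁻¹ ≠ a`.
-/

theorem rainbowConnected_of_exists_walk {V α : Type*} {G : SimpleGraph V} (c : Sym2 V → α)
    (P : Finset α)
    (h : ∀ u v, ∃ w : G.Walk u v, (w.edges.map c).Nodup ∧ ∀ e ∈ w.edges, c e ∈ P) :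
    RainbowConnected G P.card := by
  classical
  let enc : α → ℕ := fun y => if hy : y ∈ P then P.equivFin ⟨y, hy⟩ else 0
  have enc_injOn : Set.InjOn enc P := by
    intro y hy z hz hyz
    rw [mem_coe] at hy hz
    simp only [enc, dif_pos hy, dif_pos hz] at hyz
    exact congrArg Subtype.val (P.equivFin.injective (Fin.val_injective hyz))
  refine ⟨enc ∘ c, fun e he => ?_, fun u v => ?_⟩
  -- Colours outside `P` become `0`, which is legal once `G` has an edge `s(u, v)`: the walk
  -- from `u` to `v` is then nonempty, so `P` is.
  · have hP : 0 < P.card := by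
      induction e using Sym2.ind with
      | _ u v =>
        obtain ⟨w, -, hw⟩ := h u v
        cases w with
        | nil => exact absurd rfl (G.mem_edgeSet.mp he).ne
        | cons _ _ => exact card_pos.2 ⟨_, hw _ List.mem_cons_self⟩
    by_cases hy : c e ∈ P <;> simp [enc, hy, hP]
  · obtain ⟨w, hnd, hP⟩ := h u v
    have hsub := w.edges_bypass_sublist_edges
    refine ⟨w.bypass, w.bypass_isPath, ?_⟩
    rw [← List.map_map]
    refine (hnd.sublist (hsub.map c)).map_on fun y hy z hz hyz => enc_injOn ?_ ?_ hyz
    · obtain ⟨e, he, rfl⟩ := List.mem_map.1 hy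
      exact hP e (hsub.subset he)
    · obtain ⟨e, he, rfl⟩ := List.mem_map.1 hz
      exact hP e (hsub.subset he)

theorem exists_walk_mul_pow {M : Type*} [Monoid M] {G : SimpleGraph M} {a : M}
    (hadj : ∀ x, G.Adj x (x * a)) (x : M) (t : ℕ) :
    ∃ w : G.Walk x (x * a ^ t),
      w.edges = (List.range t).map fun i => s(x * a ^ i, x * a ^ i * a) := by
  induction t with
  | zero => exact ⟨Walk.nil.copy rfl (by simp), by simp⟩
  | succ t ih =>
    obtain ⟨w, hw⟩ := ih
    exact ⟨(w.concat (hadj _)).copy rfl (by rw [pow_succ, mul_assoc]),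
      by simp [Walk.edges_concat, hw, List.range_succ]⟩

theorem exists_walk_mul_prod {M α β : Type*} [CommMonoid M] [DecidableEq α]
    {G : SimpleGraph M} (c : Sym2 M → α) {B : β → Finset α} {g : β → M} {U : Finset β}
    (hB : (U : Set β).PairwiseDisjoint B)
    (hseg : ∀ b ∈ U, ∀ x, ∃ w : G.Walk x (x * g b),
      (w.edges.map c).Nodup ∧ ∀ e ∈ w.edges, c e ∈ B b)
    (x : M) :
    ∃ w : G.Walk x (x * ∏ b ∈ U, g b),
      (w.edges.map c).Nodup ∧ ∀ e ∈ w.edges, c e ∈ U.biUnion B := by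
  classical
  induction U using Finset.induction_on generalizing x with
  | empty =>
    refine ⟨Walk.nil.copy rfl (by simp), ?_, ?_⟩ <;> simp only [Walk.edges_copy] <;> simp
  | insert b U hb ih =>
    obtain ⟨w₁, hnd₁, hmem₁⟩ := hseg b (mem_insert_self b U) x
    obtain ⟨w₂, hnd₂, hmem₂⟩ := ih (hB.subset (by simp))
      (fun b' hb' => hseg b' (mem_insert_of_mem hb')) (x * g b)
    refine ⟨(w₁.append w₂).copy rfl (by rw [prod_insert hb, mul_assoc]), ?_, ?_⟩
    · rw [Walk.edges_copy, Walk.edges_append, List.map_append, List.nodup_append]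
      refine ⟨hnd₁, hnd₂, ?_⟩
      rintro _ hq₁ _ hq₂ rfl
      obtain ⟨e₁, he₁, rfl⟩ := List.mem_map.1 hq₁
      obtain ⟨e₂, he₂, hc⟩ := List.mem_map.1 hq₂
      obtain ⟨b', hb', hc₂⟩ := mem_biUnion.1 (hmem₂ e₂ he₂)
      have hdisj := hB (mem_insert_self b U) (mem_insert_of_mem hb') (fun h => hb (h ▸ hb'))
      exact disjoint_left.1 hdisj (hmem₁ e₁ he₁) (hc ▸ hc₂)
    · intro e he
      rw [Walk.edges_copy, Walk.edges_append, List.mem_append] at he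
      rcases he with he | he
      · exact mem_biUnion.2 ⟨b, mem_insert_self b U, hmem₁ e he⟩
      · exact biUnion_subset_biUnion_of_subset_left _ (subset_insert b U) (hmem₂ e he)

theorem Nat.mod_eq_ite_of_lt_two_mul {x k : ℕ} (h : x < 2 * k) :
    x % k = if x < k then x else x - k := by
  split_ifs with hx
  · exact Nat.mod_eq_of_lt hx
  · rw [Nat.mod_eq_sub_mod (not_lt.1 hx), Nat.mod_eq_of_lt (by omega)]

/-- The colour of the `p`-th edge of an `n`-cycle. -/
def cycleLabel (n : ℕ) (p : ZMod n) : ℕ := p.val % ((n + 1) / 2)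

section CycleLabel

variable {n : ℕ} [NeZero n]

theorem cycleLabel_lt (p : ZMod n) : cycleLabel n p < (n + 1) / 2 :=
  Nat.mod_lt _ (by have := NeZero.pos n; omega)

theorem cycleLabel_of_le_two (hn : n ≤ 2) (p : ZMod n) : cycleLabel n p = 0 := by
  have := NeZero.pos n
  rw [cycleLabel, show (n + 1) / 2 = 1 by omega, Nat.mod_one]

theorem cycleLabel_add_injOn (p : ZMod n) :
    Set.InjOn (fun i : ℕ => cycleLabel n (p + i)) (Set.Iio (n / 2)) := by
  -- Equal labels would make `j - i` or `n - (j - i)` a multiple of `⌈n/2⌉`, but these lie in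
  -- `(0, ⌈n/2⌉)` and `(⌈n/2⌉, 2⌈n/2⌉)`.
  intro i hi j hj hij
  simp only [Set.mem_Iio, cycleLabel] at hi hj hij
  have hp := p.val_lt
  rw [ZMod.val_add, ZMod.val_add, ZMod.val_natCast_of_lt (by omega),
    ZMod.val_natCast_of_lt (by omega)] at hij
  have hA := Nat.mod_eq_ite_of_lt_two_mul (x := p.val + i) (k := n) (by omega)
  have hB := Nat.mod_eq_ite_of_lt_two_mul (x := p.val + j) (k := n) (by omega)
  generalize (p.val + i) % n = A at hA hij
  generalize (p.val + j) % n = B at hB hij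
  rw [Nat.mod_eq_ite_of_lt_two_mul (by split_ifs at hA <;> omega),
    Nat.mod_eq_ite_of_lt_two_mul (by split_ifs at hB <;> omega)] at hij
  split_ifs at hA hB hij <;> omega

end CycleLabel

section CosetPosition

variable {G : Type*} [Group G]

theorem zpow_eq_zpow_iff_intCast_eq (x : G) {m n : ℤ} :
    x ^ m = x ^ n ↔ (m : ZMod (orderOf x)) = n :=
  zpow_eq_zpow_iff_modEq.trans (ZMod.intCast_eq_intCast_iff _ _ _).symm

theorem exists_zpow_eq_out_inv_mul (a x : G) :
    ∃ k : ℤ, a ^ k = (x : G ⧸ Subgroup.zpowers a).out⁻¹ * x :=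
  Subgroup.mem_zpowers_iff.mp (QuotientGroup.eq.mp (QuotientGroup.out_eq' _))

/-- The position of `x` on the cycle `r, r * a, r * a ^ 2, …` through the chosen representative
`r` of its coset `x ⟨a⟩`. -/
noncomputable def cosetPos (a x : G) : ZMod (orderOf a) :=
  (exists_zpow_eq_out_inv_mul a x).choose

theorem cosetPos_mul_zpow (a x : G) (k : ℤ) : cosetPos a (x * a ^ k) = cosetPos a x + k := by
  have hcoset : ((x * a ^ k : G) : G ⧸ Subgroup.zpowers a) = x :=
    QuotientGroup.mk_mul_of_mem x (Subgroup.zpow_mem_zpowers a k)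
  have hx := (exists_zpow_eq_out_inv_mul a x).choose_spec
  have hxa := (exists_zpow_eq_out_inv_mul a (x * a ^ k)).choose_spec
  have := (zpow_eq_zpow_iff_intCast_eq a).mp
    (hxa.trans (by rw [hcoset, ← mul_assoc, ← hx, ← zpow_add]))
  simpa [cosetPos] using this

theorem cosetPos_mul_pow (a x : G) (i : ℕ) : cosetPos a (x * a ^ i) = cosetPos a x + i := by
  simpa using cosetPos_mul_zpow a x i

end CosetPosition

section MinimalGenerating

variable {G : Type*} [Group G]

def IsMinimalGenerating (T : Finset G) : Prop :=
  Subgroup.closure (T : Set G) = ⊤ ∧ ∀ T' ⊂ T, Subgroup.closure (T' : Set G) ≠ ⊤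

variable {T : Finset G}

theorem IsMinimalGenerating.notMem_closure_erase [DecidableEq G] (hT : IsMinimalGenerating T)
    {b : G} (hb : b ∈ T) : b ∉ Subgroup.closure (T.erase b : Set G) := by
  intro hb'
  refine hT.2 _ (erase_ssubset hb) (eq_top_iff.2 (hT.1 ▸ (Subgroup.closure_le _).2 fun x hx => ?_))
  rcases eq_or_ne x b with rfl | hxb
  · exact hb'
  · exact Subgroup.subset_closure (mem_erase.2 ⟨hxb, hx⟩)

theorem IsMinimalGenerating.one_notMem (hT : IsMinimalGenerating T) : (1 : G) ∉ T := by
  classical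
  exact fun h => hT.notMem_closure_erase h (one_mem _)

theorem IsMinimalGenerating.inv_eq_self (hT : IsMinimalGenerating T) {a : G} (ha : a ∈ T)
    (ha' : a⁻¹ ∈ T) : a⁻¹ = a := by
  classical
  by_contra hne
  exact hT.notMem_closure_erase ha'
    (inv_mem (Subgroup.subset_closure (mem_erase.2 ⟨Ne.symm hne, ha⟩)))

end MinimalGenerating

/-- The colours reserved for the edges of the generator `a`. -/
noncomputable def colorBlock {M : Type*} [Monoid M] (a : M) : Finset (M × ℕ) :=
  {a} ×ˢ range ((orderOf a + 1) / 2)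

theorem pairwiseDisjoint_colorBlock {M : Type*} [Monoid M] (s : Set M) :
    s.PairwiseDisjoint colorBlock :=
  fun _ _ _ _ hab => disjoint_product.2 (Or.inl (disjoint_singleton.2 hab))

theorem card_biUnion_colorBlock {M : Type*} [Monoid M] [DecidableEq M] (T : Finset M) :
    (T.biUnion colorBlock).card = ∑ a ∈ T, (orderOf a + 1) / 2 := by
  simp [card_biUnion (pairwiseDisjoint_colorBlock _), colorBlock]

section Cayley

variable {Γ : Type*} [CommGroup Γ]

theorem cayley_adj_mul {S : Set Γ} {a : Γ} (ha : a ∈ S) (ha1 : a ≠ 1) (x : Γ) :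
    (cayley S).Adj x (x * a) := by
  rw [cayley, fromRel_adj, mul_inv_cancel_comm]
  exact ⟨by simpa using ha1, Or.inr ha⟩

theorem exists_prod_zpow_eq [Finite Γ] {T : Finset Γ} (hT : Subgroup.closure (T : Set Γ) = ⊤)
    (g : Γ) : ∃ k : Γ → ℤ, (∀ a, (k a).natAbs ≤ orderOf a / 2) ∧ ∏ a ∈ T, a ^ k a = g := by
  have hg : g ∈ Submonoid.closure (T : Set Γ) := by
    rw [← Subgroup.closure_toSubmonoid_of_finite, Subgroup.mem_toSubmonoid, hT]
    exact Subgroup.mem_top g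
  obtain ⟨f, -, hf⟩ := Submonoid.mem_closure_finset.1 hg
  refine ⟨fun a => (f a : ZMod (orderOf a)).valMinAbs, fun a => ?_, ?_⟩
  · have : NeZero (orderOf a) := ⟨(orderOf_pos a).ne'⟩
    exact ZMod.natAbs_valMinAbs_le _
  · rw [← hf]
    refine prod_congr rfl fun a _ => ?_
    rw [← zpow_natCast, zpow_eq_zpow_iff_intCast_eq, ZMod.coe_valMinAbs, Int.cast_natCast]

open scoped Classical in
/-- Edges not generated by `T` get the junk colour `(1, 0)`; the rainbow walks never use them. -/
noncomputable def cayleyColoring (T : Finset Γ) (e : Sym2 Γ) : Γ × ℕ :=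
  if h : ∃ p : Γ × Γ, p.1 ∈ T ∧ e = s(p.2, p.2 * p.1) then
    (h.choose.1, cycleLabel (orderOf h.choose.1) (cosetPos h.choose.1 h.choose.2))
  else (1, 0)

variable [Finite Γ] {T : Finset Γ}

-- An edge `s(x, x * a) = s(y, y * a⁻¹)` is claimed by both `a` and `a⁻¹`; minimality of `T`
-- rules this out unless `a = a⁻¹`, in which case both cycle labels vanish.
theorem cayleyColoring_mk_mul (hT : IsMinimalGenerating T) {a : Γ} (ha : a ∈ T) (x : Γ) :
    cayleyColoring T s(x, x * a) = (a, cycleLabel (orderOf a) (cosetPos a x)) := by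
  have hex : ∃ p : Γ × Γ, p.1 ∈ T ∧ s(x, x * a) = s(p.2, p.2 * p.1) := ⟨(a, x), ha, rfl⟩
  rw [cayleyColoring, dif_pos hex]
  obtain ⟨hbT, hedge⟩ := hex.choose_spec
  generalize hex.choose = p at hbT hedge ⊢
  obtain ⟨b, y⟩ := p
  rcases Sym2.eq_iff.mp hedge with ⟨rfl, hxy⟩ | ⟨rfl, hyx⟩
  · rw [mul_left_cancel hxy]
  · have hba : b = a⁻¹ := eq_inv_of_mul_eq_one_left (by simpa [mul_assoc] using hyx)
    obtain rfl : b = a := hba.trans (hT.inv_eq_self ha (hba ▸ hbT))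
    have : NeZero (orderOf b) := ⟨(orderOf_pos b).ne'⟩
    have hord : orderOf b ≤ 2 := orderOf_le_of_pow_eq_one two_pos (by
      rw [sq]; nth_rw 2 [hba]; exact mul_inv_cancel b)
    simp only [cycleLabel_of_le_two hord]

variable {S : Set Γ}

theorem exists_rainbow_walk_mul_pow (hTS : (T : Set Γ) ⊆ S) (hT : IsMinimalGenerating T)
    {a : Γ} (ha : a ∈ T) (x : Γ) {t : ℕ} (ht : t ≤ orderOf a / 2) :
    ∃ w : (cayley S).Walk x (x * a ^ t), (w.edges.map (cayleyColoring T)).Nodup ∧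
      ∀ e ∈ w.edges, cayleyColoring T e ∈ colorBlock a := by
  have : NeZero (orderOf a) := ⟨(orderOf_pos a).ne'⟩
  have ha1 : a ≠ 1 := ne_of_mem_of_not_mem ha hT.one_notMem
  obtain ⟨w, hw⟩ := exists_walk_mul_pow (cayley_adj_mul (hTS ha) ha1) x t
  refine ⟨w, ?_, fun e he => ?_⟩
  · rw [hw, List.map_map]
    refine List.Nodup.map_on (fun i hi j hj hij => ?_) List.nodup_range
    simp only [Function.comp_apply, cayleyColoring_mk_mul hT ha, cosetPos_mul_pow,
      Prod.mk.injEq, true_and] at hij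
    exact cycleLabel_add_injOn _ (by simp at hi ⊢; omega) (by simp at hj ⊢; omega) hij
  · rw [hw] at he
    obtain ⟨i, -, rfl⟩ := List.mem_map.1 he
    simp [cayleyColoring_mk_mul hT ha, colorBlock, cycleLabel_lt]

theorem exists_rainbow_walk_mul_zpow (hTS : (T : Set Γ) ⊆ S) (hT : IsMinimalGenerating T)
    {a : Γ} (ha : a ∈ T) (x : Γ) {k : ℤ} (hk : k.natAbs ≤ orderOf a / 2) :
    ∃ w : (cayley S).Walk x (x * a ^ k), (w.edges.map (cayleyColoring T)).Nodup ∧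
      ∀ e ∈ w.edges, cayleyColoring T e ∈ colorBlock a := by
  obtain ⟨t, rfl | rfl⟩ := Int.eq_nat_or_neg k
  · obtain ⟨w, hnd, hmem⟩ := exists_rainbow_walk_mul_pow hTS hT ha x (t := t) (by simpa using hk)
    exact ⟨w.copy rfl (by simp), by simpa using hnd, by simpa using hmem⟩
  · obtain ⟨w, hnd, hmem⟩ :=
      exists_rainbow_walk_mul_pow hTS hT ha (x * a ^ (-t : ℤ)) (t := t) (by simpa using hk)
    exact ⟨(w.copy rfl (by simp [mul_assoc])).reverse, by simpa using hnd, by simpa using hmem⟩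

theorem exists_rainbow_walk_cayley [DecidableEq Γ] (hTS : (T : Set Γ) ⊆ S)
    (hT : IsMinimalGenerating T) (u v : Γ) :
    ∃ w : (cayley S).Walk u v, (w.edges.map (cayleyColoring T)).Nodup ∧
      ∀ e ∈ w.edges, cayleyColoring T e ∈ T.biUnion colorBlock := by
  obtain ⟨k, hk, hprod⟩ := exists_prod_zpow_eq hT.1 (u⁻¹ * v)
  obtain ⟨w, hw⟩ := exists_walk_mul_prod (cayleyColoring T) (pairwiseDisjoint_colorBlock _)
    (g := fun a => a ^ k a) (fun a ha x => exists_rainbow_walk_mul_zpow hTS hT ha x (hk a)) u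
  exact ⟨w.copy rfl (by rw [hprod, mul_inv_cancel_left]), by simpa using hw⟩

end Cayley

theorem rc_cayley_le_general {Γ : Type*} [CommGroup Γ] [Fintype Γ] (S : Finset Γ)
    (T : Finset Γ) (hTS : T ⊆ S)
    (hTgen : Subgroup.closure (T : Set Γ) = ⊤)
    (hTmin : ∀ T' ⊂ T, Subgroup.closure ((T' : Finset Γ) : Set Γ) ≠ ⊤) :
    rc (cayley (S : Set Γ)) ≤ ∑ a ∈ T, (orderOf a + 1) / 2 := by
  classical
  rw [← card_biUnion_colorBlock]
  exact Nat.sInf_le (rainbowConnected_of_exists_walk _ _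
    (exists_rainbow_walk_cayley (coe_subset.2 hTS) ⟨hTgen, hTmin⟩))

/-- Upper bound on rc of a Cayley graph of an Abelian group: for every minimal
generating subset T of S, rc(C(Γ,S)) ≤ Σ_{a ∈ T} ⌈|a|/2⌉. -/
theorem rc_cayley_le {Γ : Type*} [CommGroup Γ] [Fintype Γ] (S : Finset Γ)
    (h1 : (1 : Γ) ∉ S) (hinv : ∀ s ∈ S, s⁻¹ ∈ S)
    (hgen : Subgroup.closure (S : Set Γ) = ⊤)
    (T : Finset Γ) (hTS : T ⊆ S)
    (hTgen : Subgroup.closure (T : Set Γ) = ⊤)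
    (hTmin : ∀ T' ⊂ T, Subgroup.closure ((T' : Finset Γ) : Set Γ) ≠ ⊤) :
    rc (cayley (S : Set Γ)) ≤ ∑ a ∈ T, (orderOf a + 1) / 2 :=
  rc_cayley_le_general S T hTS hTgen hTmin
end

section
/- For cycles C_{n₁},...,C_{n_r} with all n_k even, n_k ≥ 2, rc(C_{n₁}□···□C_{n_r}) = src(C_{n₁}□···□C_{n_r}) = Σ_k n_k/2. -/
open SimpleGraph Finset

/-- The Cartesian (box) product of a family of graphs. -/
def boxProdFamily {ι : Type*} {α : ι → Type*} (G : ∀ i, SimpleGraph (α i)) :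
    SimpleGraph (∀ i, α i) where
  Adj x y := ∃ i, (G i).Adj (x i) (y i) ∧ ∀ j, j ≠ i → x j = y j
  symm := ⟨fun x y ⟨i, h, hj⟩ => ⟨i, h.symm, fun j hji => (hj j hji).symm⟩⟩
  loopless := ⟨fun x ⟨i, h, _⟩ => (G i).loopless.irrefl _ h⟩

/-!
Colour the edge `{a, a + 1}` of `C_{2m}` by `a mod m`. The shorter arc from `a` to `b` has at most
`m` consecutive edges, hence distinct colours, so it is a rainbow geodesic; stepping along it
removes exactly the colour of that step from the colours of the remaining arc. Giving the factors
of the torus disjoint palettes and correcting one coordinate at a time yields a rainbow geodesic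
between any two vertices with `∑ k, m_k` colours. Conversely, `(0, …, 0)` and `(m_1, …, m_r)` are
at distance `∑ k, m_k`, so every rainbow path between them needs that many colours.
-/

section Rainbow

variable {V : Type*} {G : SimpleGraph V}

theorem StrongRainbowConnected.rainbowConnected {k : ℕ} (h : StrongRainbowConnected G k) :
    RainbowConnected G k :=
  let ⟨c, hc, hp⟩ := h
  ⟨c, hc, fun u v => let ⟨p, hpath, _, hnd⟩ := hp u v; ⟨p, hpath, hnd⟩⟩

theorem RainbowConnected.dist_le {k : ℕ} (h : RainbowConnected G k) (u v : V) :
    G.dist u v ≤ k := by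
  obtain ⟨c, hc, hp⟩ := h
  obtain ⟨p, -, hnd⟩ := hp u v
  have hcolors : (p.edges.map c).toFinset ⊆ range k := by
    intro x hx
    obtain ⟨e, he, rfl⟩ := List.mem_map.1 (List.mem_toFinset.1 hx)
    exact mem_range.2 (hc e (p.edges_subset_edgeSet he))
  calc G.dist u v ≤ p.length := SimpleGraph.dist_le p
    _ = (p.edges.map c).toFinset.card := by
      rw [List.toFinset_card_of_nodup hnd, List.length_map, Walk.length_edges]
    _ ≤ k := by simpa using card_le_card hcolors

theorem rc_eq_and_src_eq_of_dist_eq {k : ℕ} (hs : StrongRainbowConnected G k) {u v : V}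
    (huv : G.dist u v = k) : rc G = k ∧ src G = k := by
  have hlower : ∀ K, RainbowConnected G K → k ≤ K := fun K hK => huv ▸ hK.dist_le u v
  exact ⟨le_antisymm (Nat.sInf_le hs.rainbowConnected)
      (le_csInf ⟨k, hs.rainbowConnected⟩ hlower),
    le_antisymm (Nat.sInf_le hs) (le_csInf ⟨k, hs⟩ fun K hK => hlower K hK.rainbowConnected)⟩

/-- `D a b` is the intended distance from `a` to `b` and `S a b` a set of colours reserved for a
rainbow geodesic from `a` to `b`: from every `a ≠ b` one can step to a neighbour `a'` closer to
`b` along an edge whose colour is reserved for the route from `a`, but not for that from `a'`. -/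
structure RainbowGeodesicSystem {C : Type*} (G : SimpleGraph V) (c : Sym2 V → C)
    (D : V → V → ℕ) (S : V → V → Set C) : Prop where
  dist_self : ∀ a, D a a = 0
  le_succ_of_adj : ∀ {a a'} b, G.Adj a a' → D a b ≤ D a' b + 1
  exists_step : ∀ {a b}, a ≠ b → ∃ a', G.Adj a a' ∧ D a' b + 1 = D a b ∧
    c s(a, a') ∉ S a' b ∧ insert (c s(a, a')) (S a' b) ⊆ S a b

namespace RainbowGeodesicSystem

variable {C : Type*} {c : Sym2 V → C} {D : V → V → ℕ} {S : V → V → Set C}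

theorem le_length (hs : RainbowGeodesicSystem G c D S) {a b : V} (p : G.Walk a b) :
    D a b ≤ p.length := by
  induction p with
  | nil => simp [hs.dist_self]
  | @cons _ _ w hadj q ih =>
    have := hs.le_succ_of_adj w hadj
    simp only [Walk.length_cons]
    omega

theorem exists_walk (hs : RainbowGeodesicSystem G c D S) (a b : V) :
    ∃ p : G.Walk a b, p.length = D a b ∧ (p.edges.map c).Nodup ∧
      ∀ x ∈ p.edges.map c, x ∈ S a b := by
  induction hab : D a b generalizing a with
  | zero =>
    obtain rfl : a = b := by
      by_contra hne
      obtain ⟨a', -, hD, -⟩ := hs.exists_step hne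
      omega
    exact ⟨Walk.nil, rfl, by simp, by simp⟩
  | succ N ih =>
    have hne : a ≠ b := by rintro rfl; rw [hs.dist_self] at hab; omega
    obtain ⟨a', hadj, hD, hfresh, hsub⟩ := hs.exists_step hne
    obtain ⟨p, hlen, hnd, hcol⟩ := ih a' (by omega)
    refine ⟨Walk.cons hadj p, by simp [hlen], ?_, ?_⟩
    · simp only [Walk.edges_cons, List.map_cons, List.nodup_cons]
      exact ⟨fun hx => hfresh (hcol _ hx), hnd⟩
    · simp only [Walk.edges_cons, List.map_cons, List.forall_mem_cons]
      exact ⟨hsub (Set.mem_insert _ _), fun x hx => hsub (Set.mem_insert_of_mem _ (hcol x hx))⟩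

theorem dist_eq (hs : RainbowGeodesicSystem G c D S) (a b : V) : G.dist a b = D a b := by
  obtain ⟨p, hlen, -⟩ := hs.exists_walk a b
  obtain ⟨q, hq⟩ := Reachable.exists_walk_length_eq_dist ⟨p⟩
  exact le_antisymm (hlen ▸ SimpleGraph.dist_le p) (hq ▸ hs.le_length q)

theorem strongRainbowConnected {c : Sym2 V → ℕ} {S : V → V → Set ℕ}
    (hs : RainbowGeodesicSystem G c D S) {k : ℕ} (hc : ∀ e ∈ G.edgeSet, c e < k) :
    StrongRainbowConnected G k := by
  refine ⟨c, hc, fun a b => ?_⟩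
  obtain ⟨p, hlen, hnd, -⟩ := hs.exists_walk a b
  rw [← hs.dist_eq] at hlen
  exact ⟨p, p.isPath_of_length_eq_dist hlen, hlen, hnd⟩

end RainbowGeodesicSystem

end Rainbow

theorem Fintype.sum_add_eq_sum_add_of_eq_off {ι M : Type*} [Fintype ι] [DecidableEq ι]
    [AddCommMonoid M] {f g : ι → M} (i : ι) (h : ∀ j ≠ i, f j = g j) :
    ∑ j, f j + g i = ∑ j, g j + f i := by
  rw [Fintype.sum_eq_add_sum_compl i f, Fintype.sum_eq_add_sum_compl i g,
    Finset.sum_congr rfl fun j hj => h j (by simpa using hj)]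
  abel

section BoxProduct

variable {r : ℕ} {α : Fin r → Type*} {k : Fin r → ℕ}

def blockColor (i : Fin r) (d : Fin (k i)) : ℕ := finSigmaFinEquiv ⟨i, d⟩

theorem blockColor_lt (i : Fin r) (d : Fin (k i)) : blockColor i d < ∑ i, k i :=
  (finSigmaFinEquiv _).isLt

theorem blockColor_inj {i j : Fin r} {d : Fin (k i)} {d' : Fin (k j)} :
    blockColor i d = blockColor j d' ↔ (⟨i, d⟩ : (i : Fin r) × Fin (k i)) = ⟨j, d'⟩ :=
  Fin.val_injective.eq_iff.trans finSigmaFinEquiv.injective.eq_iff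

/-- An edge of the box product moves exactly one coordinate, so exactly one summand is nonzero. -/
noncomputable def piColoring (c : ∀ i, Sym2 (α i) → Fin (k i)) : Sym2 (∀ i, α i) → ℕ :=
  open Classical in
  Sym2.lift ⟨fun x y => ∑ i, if x i = y i then 0 else blockColor i (c i s(x i, y i)),
    fun x y => Finset.sum_congr rfl fun i _ => by
      by_cases h : x i = y i <;> simp [h, Ne.symm, Sym2.eq_swap]⟩

def piColorSet (S : ∀ i, α i → α i → Set (Fin (k i))) (x y : ∀ i, α i) : Set ℕ :=
  ⋃ i, blockColor i '' S i (x i) (y i)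

variable {G : ∀ i, SimpleGraph (α i)} {c : ∀ i, Sym2 (α i) → Fin (k i)}

theorem piColoring_mk {x y : ∀ i, α i} (i : Fin r) (hi : x i ≠ y i)
    (h : ∀ j ≠ i, x j = y j) : piColoring c s(x, y) = blockColor i (c i s(x i, y i)) := by
  classical
  simp only [piColoring, Sym2.lift_mk]
  rw [Finset.sum_eq_single i (fun j _ hj => if_pos (h j hj))
    (fun hi' => absurd (Finset.mem_univ i) hi'), if_neg hi]

theorem piColoring_lt {e : Sym2 (∀ i, α i)} (he : e ∈ (boxProdFamily G).edgeSet) :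
    piColoring c e < ∑ i, k i := by
  induction e using Sym2.ind with
  | _ x y =>
    obtain ⟨i, hadj, h⟩ := he
    rw [piColoring_mk i hadj.ne h]
    exact blockColor_lt _ _

theorem RainbowGeodesicSystem.pi {D : ∀ i, α i → α i → ℕ}
    {S : ∀ i, α i → α i → Set (Fin (k i))}
    (hs : ∀ i, RainbowGeodesicSystem (G i) (c i) (D i) (S i)) :
    RainbowGeodesicSystem (boxProdFamily G) (piColoring c)
      (fun x y => ∑ i, D i (x i) (y i)) (piColorSet S) where
  dist_self x := by simp [(hs _).dist_self]
  le_succ_of_adj := by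
    rintro x x' y ⟨i, hadj, h⟩
    have := Fintype.sum_add_eq_sum_add_of_eq_off (f := fun j => D j (x j) (y j))
      (g := fun j => D j (x' j) (y j)) i fun j hj => by rw [h j hj]
    have := (hs i).le_succ_of_adj (y i) hadj
    omega
  exists_step := by
    classical
    intro x y hxy
    obtain ⟨i, hi⟩ := Function.ne_iff.1 hxy
    obtain ⟨a', hadj, hD, hfresh, hsub⟩ := (hs i).exists_step hi
    set x' := Function.update x i a'
    have hx'i : x' i = a' := Function.update_self i a' x
    have hx'j : ∀ j ≠ i, x' j = x j := fun j hj => Function.update_of_ne hj a' x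
    have hcol : piColoring c s(x, x') = blockColor i (c i s(x i, a')) := by
      rw [piColoring_mk i (by rw [hx'i]; exact hadj.ne) fun j hj => (hx'j j hj).symm, hx'i]
    refine ⟨x', ⟨i, hx'i ▸ hadj, fun j hj => (hx'j j hj).symm⟩, ?_, ?_, ?_⟩
    · have := Fintype.sum_add_eq_sum_add_of_eq_off (f := fun j => D j (x' j) (y j))
        (g := fun j => D j (x j) (y j)) i fun j hj => by rw [hx'j j hj]
      simp only [hx'i] at this
      omega
    · rw [hcol]
      simp only [piColorSet, Set.mem_iUnion, Set.mem_image, not_exists, not_and]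
      intro j d hd heq
      obtain ⟨rfl, hdd⟩ := Sigma.mk.inj_iff.1 (blockColor_inj.1 heq)
      rw [eq_of_heq hdd, hx'i] at hd
      exact hfresh hd
    · rw [hcol, Set.insert_subset_iff]
      refine ⟨Set.mem_iUnion.2 ⟨i, _, hsub (Set.mem_insert _ _), rfl⟩, ?_⟩
      simp only [piColorSet, Set.iUnion_subset_iff]
      intro j
      by_cases hj : j = i
      · subst hj
        rw [hx'i]
        exact (Set.image_mono fun d hd => hsub (Set.mem_insert_of_mem _ hd)).trans
          (Set.subset_iUnion (fun j => blockColor j '' S j (x j) (y j)) j)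
      · rw [hx'j j hj]
        exact Set.subset_iUnion (fun j => blockColor j '' S j (x j) (y j)) j

end BoxProduct

namespace EvenCycle

variable {n m : ℕ}

def norm (x : Fin n) : ℕ := min x.val (n - x.val)

/-- For `n = 2 * m`, the edge `{a, a + 1}` gets colour `a mod m`; the formula `(a + b) / 2` returns
`a` also on the wrap-around edge `{2 * m - 1, 0}`. -/
def coloring (hm : 0 < m) : Sym2 (Fin n) → Fin m :=
  Sym2.lift ⟨fun a b => ⟨(a.val + b.val) / 2 % m, Nat.mod_lt _ hm⟩,
    fun a b => by simp only [Nat.add_comm]⟩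

def arcColors (u : Fin n) (d : ℕ) : Set (Fin m) := {col | ∃ j < d, col.val = (u.val + j) % m}

def colorSet (a b : Fin n) : Set (Fin m) :=
  if (b - a).val ≤ m then arcColors a (b - a).val else arcColors b (a - b).val

theorem arcColors_mono (u : Fin n) {d d' : ℕ} (h : d ≤ d') :
    (arcColors u d : Set (Fin m)) ⊆ arcColors u d' :=
  fun _ ⟨j, hj, hcol⟩ => ⟨j, by omega, hcol⟩

theorem arcColors_zero (u : Fin n) : (arcColors u 0 : Set (Fin m)) = ∅ := by
  simp [arcColors]

theorem eq_of_add_mod_eq {u j j' : ℕ} (hj : j < m) (hj' : j' < m)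
    (h : (u + j) % m = (u + j') % m) : j = j' := by
  have := Nat.ModEq.add_left_cancel' u h
  rwa [Nat.ModEq, Nat.mod_eq_of_lt hj, Nat.mod_eq_of_lt hj'] at this

section
variable [NeZero n]

theorem val_mod_eq (hn : n = 2 * m) (x y : Fin n) : x.val % m = (y.val + (x - y).val) % m := by
  conv_lhs => rw [← add_sub_cancel y x]
  rw [Fin.val_add, Nat.mod_mod_of_dvd _ ⟨2, by rw [hn, Nat.mul_comm]⟩]

theorem norm_zero : norm (0 : Fin n) = 0 := by simp [norm]

theorem norm_neg (x : Fin n) : norm (-x) = norm x := by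
  have := x.isLt
  rw [norm, norm, Fin.val_neg]
  split_ifs with h
  · simp [h]
  · omega

theorem norm_add_one_le (x : Fin n) : norm (x + 1) ≤ norm x + 1 := by
  have := x.isLt
  have : (1 : Fin n).val ≤ 1 := by rw [Fin.val_one']; exact Nat.mod_le _ _
  rw [norm, norm, Fin.val_add_eq_ite]
  split_ifs <;> omega

theorem norm_sub_one_le (x : Fin n) : norm (x - 1) ≤ norm x + 1 := by
  rw [show x - 1 = -(-x + 1) by abel, norm_neg, ← norm_neg x]
  exact norm_add_one_le _

theorem val_one_of_two_le (hn : 2 ≤ n) : (1 : Fin n).val = 1 := by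
  rw [Fin.val_one', Nat.mod_eq_of_lt hn]

theorem coloring_mk_add_one (hn : n = 2 * m) (hm : 0 < m) (a : Fin n) :
    (coloring hm s(a, a + 1)).val = a.val % m := by
  have := a.isLt
  simp only [coloring, Sym2.lift_mk]
  rw [Fin.val_add_eq_ite, val_one_of_two_le (by omega)]
  split_ifs
  · rw [show (a.val + (a.val + 1 - n)) / 2 = m - 1 by omega, show a.val = m - 1 + m by omega,
      Nat.add_mod_right]
  · congr 1
    omega

theorem val_add_one_add_mod (hn : n = 2 * m) (a : Fin n) (j : ℕ) :
    ((a + 1).val + j) % m = (a.val + (j + 1)) % m := by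
  have := NeZero.pos n
  rw [← Nat.mod_add_mod, val_mod_eq hn (a + 1) a, add_sub_cancel_left,
    val_one_of_two_le (by omega), Nat.mod_add_mod, Nat.add_assoc, Nat.add_comm 1]

theorem step_add_one (hn : n = 2 * m) (hm : 0 < m) {a b : Fin n} (hab : a ≠ b)
    (hd : (b - a).val ≤ m) :
    norm (b - (a + 1)) + 1 = norm (b - a) ∧ coloring hm s(a, a + 1) ∉ colorSet (a + 1) b ∧
      insert (coloring hm s(a, a + 1)) (colorSet (a + 1) b) ⊆ colorSet a b := by
  have hx : b - a ≠ 0 := sub_ne_zero.2 hab.symm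
  have hd0 : 0 < (b - a).val := Nat.pos_of_ne_zero (Fin.val_ne_zero_iff.2 hx)
  have hval : (b - (a + 1)).val = (b - a).val - 1 := by
    rw [show b - (a + 1) = b - a - 1 by abel, Fin.val_sub_one_of_ne_zero hx]
  have hS' : colorSet (a + 1) b = arcColors (m := m) (a + 1) ((b - a).val - 1) := by
    rw [colorSet, hval, if_pos (by omega)]
  have hS : colorSet a b = arcColors (m := m) a (b - a).val := by rw [colorSet, if_pos hd]
  refine ⟨?_, ?_, ?_⟩
  · have := (b - a).isLt
    rw [norm, norm, hval]
    omega
  · rw [hS']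
    rintro ⟨j, hj, hcol⟩
    rw [coloring_mk_add_one hn hm, val_add_one_add_mod hn, ← Nat.add_zero a.val,
      Nat.add_assoc, Nat.zero_add] at hcol
    have := eq_of_add_mod_eq hm (by omega) hcol
    omega
  · rw [hS, hS', Set.insert_subset_iff]
    refine ⟨⟨0, hd0, by rw [coloring_mk_add_one hn hm, Nat.add_zero]⟩, ?_⟩
    rintro col ⟨j, hj, hcol⟩
    exact ⟨j + 1, by omega, by rw [hcol, val_add_one_add_mod hn]⟩

theorem step_sub_one (hn : n = 2 * m) (hm : 0 < m) {a b : Fin n} (hd : m < (b - a).val) :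
    norm (b - (a - 1)) + 1 = norm (b - a) ∧ coloring hm s(a, a - 1) ∉ colorSet (a - 1) b ∧
      insert (coloring hm s(a, a - 1)) (colorSet (a - 1) b) ⊆ colorSet a b := by
  have := (b - a).isLt
  have hx : b - a ≠ 0 := fun h => by simp [h] at hd
  have hy : a - b ≠ 0 := by rw [← neg_sub]; exact neg_ne_zero.2 hx
  have he : (a - b).val = n - (b - a).val := by rw [← neg_sub, Fin.val_neg, if_neg hx]
  have hval : (a - 1 - b).val = (a - b).val - 1 := by
    rw [show a - 1 - b = a - b - 1 by abel, Fin.val_sub_one_of_ne_zero hy]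
  have hcol : (coloring hm s(a, a - 1)).val = (b.val + ((a - b).val - 1)) % m := by
    rw [Sym2.eq_swap, show s(a - 1, a) = s(a - 1, a - 1 + 1) by rw [sub_add_cancel],
      coloring_mk_add_one hn hm, val_mod_eq hn (a - 1) b, hval]
  have hval' : (b - (a - 1)).val = if n ≤ (b - a).val + 1 then 0 else (b - a).val + 1 := by
    rw [show b - (a - 1) = b - a + 1 by abel, Fin.val_add_eq_ite, val_one_of_two_le (by omega)]
    split_ifs <;> omega
  have hS' : colorSet (a - 1) b ⊆ arcColors (m := m) b ((a - b).val - 1) := by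
    rw [colorSet]
    split_ifs with h
    · rw [hval'] at h ⊢
      split_ifs at h ⊢
      · rw [arcColors_zero]
        exact Set.empty_subset _
      · omega
    · rw [hval]
  have hS : colorSet a b = arcColors (m := m) b (a - b).val := by
    rw [colorSet, if_neg (by omega)]
  refine ⟨?_, ?_, ?_⟩
  · rw [norm, norm, hval']
    split_ifs <;> omega
  · intro hmem
    obtain ⟨j, hj, hj'⟩ := hS' hmem
    rw [hcol] at hj'
    have := eq_of_add_mod_eq (by omega) (by omega) hj'
    omega
  · rw [hS, Set.insert_subset_iff]
    exact ⟨⟨_, by omega, hcol⟩, hS'.trans (arcColors_mono _ (by omega))⟩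

end

theorem rainbowGeodesicSystem (hn : n = 2 * m) (hm : 0 < m) :
    RainbowGeodesicSystem (cycleGraph n) (coloring hm) (fun a b => norm (b - a)) colorSet := by
  obtain ⟨p, rfl⟩ : ∃ p, n = p + 2 := ⟨n - 2, by omega⟩
  refine ⟨fun a => by rw [sub_self, norm_zero], ?_, ?_⟩
  · intro a a' b hadj
    rcases cycleGraph_adj.1 hadj with h | h
    · rw [show b - a = b - a' - 1 by rw [← h]; abel]
      exact norm_sub_one_le _
    · rw [show b - a = b - a' + 1 by rw [← h]; abel]
      exact norm_add_one_le _
  · intro a b hab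
    by_cases hd : (b - a).val ≤ m
    · exact ⟨a + 1, cycleGraph_adj.2 (Or.inr (add_sub_cancel_left a 1)),
        step_add_one hn hm hab hd⟩
    · exact ⟨a - 1, cycleGraph_adj.2 (Or.inl (sub_sub_cancel a 1)),
        step_sub_one hn hm (not_le.1 hd)⟩

theorem exists_norm_eq (hn : n = 2 * m) (hm : 0 < m) : ∃ a b : Fin n, norm (b - a) = m := by
  refine ⟨⟨0, by omega⟩, ⟨m, by omega⟩, ?_⟩
  rw [norm, Fin.sub_val_of_le (Nat.zero_le _)]
  simp only [Nat.sub_zero]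
  omega

end EvenCycle

/-- If all cycle lengths are even then rc = src = Σ n_k/2 for the product of cycles. -/
theorem rc_src_torus_even {r : ℕ} (n : Fin r → ℕ) (h : ∀ k, 2 ≤ n k)
    (he : ∀ k, Even (n k)) :
    rc (boxProdFamily fun k => SimpleGraph.cycleGraph (n k)) = ∑ k, n k / 2 ∧
    src (boxProdFamily fun k => SimpleGraph.cycleGraph (n k)) = ∑ k, n k / 2 := by
  have hn : ∀ k, n k = 2 * (n k / 2) := fun k => by obtain ⟨t, ht⟩ := he k; omega
  have hm : ∀ k, 0 < n k / 2 := fun k => by have := h k; omega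
  have hs := RainbowGeodesicSystem.pi fun k => EvenCycle.rainbowGeodesicSystem (hn k) (hm k)
  choose u v huv using fun k => EvenCycle.exists_norm_eq (hn k) (hm k)
  have hdist : (boxProdFamily fun k => cycleGraph (n k)).dist u v = ∑ k, n k / 2 := by
    rw [hs.dist_eq]
    exact sum_congr rfl fun k _ => huv k
  exact rc_eq_and_src_eq_of_dist_eq (hs.strongRainbowConnected fun _ => piColoring_lt) hdist
end

section
/- In G(rd^m, d) with d ≥ 2, r ≥ 1, m ≥ 1, for every vertex v there exists a shortest path from 0 to v, represented as a sequence of steps each equal to +d^j or −d^j, that contains no pair of steps +d^j and −d^j for the same j, contains fewer than or equal to ⌊d/2⌋ steps +d^j and at most ⌊d/2⌋ steps −d^j for each 0 ≤ j ≤ m−1, and contains at most ⌊r/2⌋ steps +d^m and at most ⌊r/2⌋ steps −d^m. -/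
/-- The recursive circulant `G(N,d)`: the circulant graph on `ZMod N` with jumps
`±d^i` for `0 ≤ i ≤ ⌈log_d N⌉ - 1`. -/
def recCirc (N d : ℕ) : SimpleGraph (ZMod N) :=
  SimpleGraph.circulantGraph {x : ZMod N | ∃ i < Nat.clog d N, x = (d : ZMod N) ^ i}

/-- The value of a step: `(j, true)` is `+d^j` and `(j, false)` is `-d^j`. -/
def stepVal (N d : ℕ) (p : ℕ × Bool) : ZMod N :=
  if p.2 then (d : ZMod N) ^ p.1 else -((d : ZMod N) ^ p.1)

/-!
Steps `±d^j` of a path from `0` form a list whose sum is the endpoint, so shortest paths are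
shortest step lists. Among the shortest lists to `v`, take one whose exponent sum is maximal.
Any sub-multiset of its steps can then only be exchanged for at least as many steps with the
same sum, and for exactly as many only at a smaller or equal exponent sum. A pair `+d^j, -d^j`
can simply be dropped; more than `⌊d/2⌋` equal steps `±d^j` can be carried into one step
`±d^(j+1)` plus `d - ⌊d/2⌋ - 1` opposite steps `∓d^j`, which is never longer and raises the
exponent sum; and when `k d^j = 0` (as for `k = r, j = m`, or `k = d` when `d^(j+1) = rd^m`),
more than `⌊k/2⌋` equal steps `±d^j` wrap around to fewer opposite steps.
-/

open SimpleGraph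

section Steps

variable {N d : ℕ}

lemma stepVal_not (j : ℕ) (b : Bool) : stepVal N d (j, !b) = -stepVal N d (j, b) := by
  cases b <;> simp [stepVal]

lemma stepVal_succ (j : ℕ) (b : Bool) :
    stepVal N d (j + 1, b) = d • stepVal N d (j, b) := by
  cases b <;> simp [stepVal, pow_succ, nsmul_eq_mul, mul_comm]

lemma nsmul_stepVal_eq_zero {k j : ℕ} (hk : k • (d : ZMod N) ^ j = 0) (b : Bool) :
    k • stepVal N d (j, b) = 0 := by
  cases b <;> simp [stepVal, hk]

lemma stepVal_ne_zero {p : ℕ × Bool} (hp : p.1 < Nat.clog d N) : stepVal N d p ≠ 0 := by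
  have hd : 0 < d := Nat.pos_of_ne_zero (by rintro rfl; simp at hp)
  have hpow : ((d : ZMod N) ^ p.1) ≠ 0 := by
    rw [← Nat.cast_pow, Ne, ZMod.natCast_eq_zero_iff]
    exact Nat.not_dvd_of_pos_of_lt (pow_pos hd _) (Nat.pow_lt_of_lt_clog hp)
  obtain ⟨j, _ | _⟩ := p <;> simpa [stepVal] using hpow

lemma recCirc_adj_iff {a b : ZMod N} :
    (recCirc N d).Adj a b ↔ ∃ p : ℕ × Bool, p.1 < Nat.clog d N ∧ b = a + stepVal N d p := by
  simp only [recCirc, circulantGraph_adj]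
  constructor
  · rintro ⟨-, ⟨i, hi, h⟩ | ⟨i, hi, h⟩⟩
    · exact ⟨(i, false), hi, by simp [stepVal, ← h]⟩
    · exact ⟨(i, true), hi, by simp [stepVal, ← h]⟩
  · rintro ⟨⟨i, _ | _⟩, hi, rfl⟩
    · exact ⟨by simpa using stepVal_ne_zero hi, Or.inl ⟨i, hi, by simp [stepVal]⟩⟩
    · exact ⟨by simpa using stepVal_ne_zero hi, Or.inr ⟨i, hi, by simp [stepVal]⟩⟩

lemma exists_walk_of_steps {L : List (ℕ × Bool)} (hL : ∀ p ∈ L, p.1 < Nat.clog d N)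
    {a b : ZMod N} (hsum : (L.map (stepVal N d)).sum = b - a) :
    ∃ w : (recCirc N d).Walk a b, w.length = L.length := by
  induction L generalizing a with
  | nil => exact ⟨Walk.nil.copy rfl (sub_eq_zero.1 hsum.symm).symm, by simp⟩
  | cons p L ih =>
    have hadj : (recCirc N d).Adj a (a + stepVal N d p) :=
      recCirc_adj_iff.2 ⟨p, hL p (by simp), rfl⟩
    obtain ⟨w, hw⟩ := ih (fun q hq => hL q (by simp [hq])) (a := a + stepVal N d p)
      (by rw [List.map_cons, List.sum_cons] at hsum; rw [sub_add_eq_sub_sub, ← hsum]; abel)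
    exact ⟨Walk.cons hadj w, by simp [hw]⟩

lemma exists_steps_of_walk {a b : ZMod N} (w : (recCirc N d).Walk a b) :
    ∃ L : List (ℕ × Bool), (∀ p ∈ L, p.1 < Nat.clog d N) ∧
      (L.map (stepVal N d)).sum = b - a ∧ L.length = w.length := by
  induction w with
  | nil => exact ⟨[], by simp, by simp, rfl⟩
  | cons hadj w ih =>
    obtain ⟨p, hp, rfl⟩ := recCirc_adj_iff.1 hadj
    obtain ⟨L, hL, hsum, hlen⟩ := ih
    refine ⟨p :: L, ?_, ?_, by simp [hlen]⟩
    · simpa [hp] using hL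
    · rw [List.map_cons, List.sum_cons, hsum]; abel

def expSum (L : List (ℕ × Bool)) : ℕ := (L.map Prod.fst).sum

lemma expSum_le_length_mul {L : List (ℕ × Bool)} {c : ℕ} (hL : ∀ p ∈ L, p.1 < c) :
    expSum L ≤ L.length * c := by
  have := List.sum_le_card_nsmul (L.map Prod.fst) c <| by
    simp only [List.mem_map]
    rintro _ ⟨p, hp, rfl⟩
    exact (hL p hp).le
  simpa [expSum] using this

structure IsExtremalSteps (N d : ℕ) (v : ZMod N) (L : List (ℕ × Bool)) : Prop where
  lt_clog : ∀ p ∈ L, p.1 < Nat.clog d N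
  sum_eq : (L.map (stepVal N d)).sum = v
  length_le : ∀ L' : List (ℕ × Bool), (∀ p ∈ L', p.1 < Nat.clog d N) →
    (L'.map (stepVal N d)).sum = v → L.length ≤ L'.length
  expSum_le : ∀ L' : List (ℕ × Bool), (∀ p ∈ L', p.1 < Nat.clog d N) →
    (L'.map (stepVal N d)).sum = v → L'.length = L.length → expSum L' ≤ expSum L

lemma exists_isExtremalSteps (hd : 1 < d) (hN : 1 < N) (v : ZMod N) :
    ∃ L, IsExtremalSteps N d v L := by
  classical
  have : NeZero N := ⟨by omega⟩
  let Reaches (L : List (ℕ × Bool)) : Prop :=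
    (∀ p ∈ L, p.1 < Nat.clog d N) ∧ (L.map (stepVal N d)).sum = v
  have hex : ∃ n, ∃ L, Reaches L ∧ L.length = n := by
    refine ⟨_, List.replicate v.val (0, true), ⟨?_, ?_⟩, rfl⟩
    · intro p hp
      rw [List.eq_of_mem_replicate hp]
      exact Nat.clog_pos hd hN
    · simp [stepVal]
  obtain ⟨L₀, hL₀, hlen₀⟩ := Nat.find_spec hex
  set n := Nat.find hex
  have hbound : expSum L₀ ≤ n * Nat.clog d N := by
    rw [← hlen₀]
    exact expSum_le_length_mul hL₀.1
  obtain ⟨L, hL, hlen, hexp⟩ := Nat.findGreatest_spec (P := fun e => ∃ L, Reaches L ∧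
    L.length = n ∧ expSum L = e) hbound ⟨L₀, hL₀, hlen₀, rfl⟩
  refine ⟨L, hL.1, hL.2, fun L' h₁ h₂ => hlen ▸ Nat.find_min' hex ⟨L', ⟨h₁, h₂⟩, rfl⟩,
    fun L' h₁ h₂ h₃ => hexp ▸ Nat.le_findGreatest ?_ ⟨L', ⟨h₁, h₂⟩, h₃.trans hlen, rfl⟩⟩
  exact hlen ▸ h₃ ▸ expSum_le_length_mul h₁

namespace IsExtremalSteps

variable {v : ZMod N} {L : List (ℕ × Bool)}

lemma length_eq_dist (h : IsExtremalSteps N d v L) : L.length = (recCirc N d).dist 0 v := by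
  obtain ⟨w, hw⟩ :=
    exists_walk_of_steps h.lt_clog (a := 0) (b := v) (by rw [h.sum_eq, sub_zero])
  obtain ⟨w', hw'⟩ := w.reachable.exists_walk_length_eq_dist
  obtain ⟨L', hL', hsum, hlen⟩ := exists_steps_of_walk w'
  refine le_antisymm ?_ (hw ▸ dist_le w)
  rw [← hw', ← hlen]
  exact h.length_le L' hL' (by rw [hsum, sub_zero])

lemma exchange (h : IsExtremalSteps N d v L) {S R : List (ℕ × Bool)} (hS : S.Subperm L)
    (hR : ∀ p ∈ R, p.1 < Nat.clog d N)
    (hsum : (R.map (stepVal N d)).sum = (S.map (stepVal N d)).sum) :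
    S.length ≤ R.length ∧ (R.length = S.length → expSum R ≤ expSum S) := by
  have hperm : (S ++ L.diff S).Perm L :=
    List.subperm_append_diff_self_of_count_le (List.subperm_ext_iff.1 hS)
  have hvalid : ∀ p ∈ R ++ L.diff S, p.1 < Nat.clog d N := by
    simp only [List.mem_append]
    rintro p (hp | hp)
    exacts [hR p hp, h.lt_clog p (List.diff_subset _ _ hp)]
  have hsum' : ((R ++ L.diff S).map (stepVal N d)).sum = v := by
    rw [← h.sum_eq, ← (hperm.map _).sum_eq, List.map_append, List.map_append, List.sum_append,
      List.sum_append, hsum]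
  have hlen := hperm.length_eq
  have hexp := (hperm.map Prod.fst).sum_eq
  have hle := h.length_le _ hvalid hsum'
  simp only [List.length_append] at hlen hle
  refine ⟨by omega, fun hRS => ?_⟩
  have := h.expSum_le _ hvalid hsum' (by simp only [List.length_append]; omega)
  simp only [expSum, List.map_append, List.sum_append] at this hexp ⊢
  omega

lemma not_mem_and_mem (h : IsExtremalSteps N d v L) (j : ℕ) :
    ¬((j, true) ∈ L ∧ (j, false) ∈ L) := by
  rintro ⟨ht, hf⟩
  have hS : [(j, true), (j, false)].Subperm L :=
    List.Nodup.subperm (by simp) (by simp [List.cons_subset, ht, hf])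
  simpa using (h.exchange hS (R := []) (by simp) (by simp [stepVal])).1

lemma count_le_of_nsmul_eq_zero (h : IsExtremalSteps N d v L) {k j : ℕ} (hk : 0 < k)
    (hz : k • (d : ZMod N) ^ j = 0) (b : Bool) : L.count (j, b) ≤ k / 2 := by
  by_contra! hcount
  set t := k / 2 + 1
  have hS : (List.replicate t (j, b)).Subperm L := (List.replicate_sublist_iff.2 hcount).subperm
  have hj : j < Nat.clog d N := h.lt_clog (j, b) (List.count_pos_iff.1 (by omega))
  have hsum : (k - t) • stepVal N d (j, !b) = t • stepVal N d (j, b) := by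
    rw [stepVal_not, smul_neg, sub_nsmul _ (by omega), nsmul_stepVal_eq_zero hz]
    abel
  have := (h.exchange hS (R := List.replicate (k - t) (j, !b)) (by simp [hj])
    (by simpa only [List.map_replicate, List.sum_replicate] using hsum)).1
  simp only [List.length_replicate] at this
  omega

lemma count_le_of_succ_lt_clog (h : IsExtremalSteps N d v L) {j : ℕ}
    (hj : j + 1 < Nat.clog d N) (b : Bool) : L.count (j, b) ≤ d / 2 := by
  have hd : 1 < d := by by_contra! hd; simp [Nat.clog_of_left_le_one hd] at hj
  by_contra! hcount
  set t := d / 2 + 1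
  have hS : (List.replicate t (j, b)).Subperm L := (List.replicate_sublist_iff.2 hcount).subperm
  have hsum :
      stepVal N d (j + 1, b) + (d - t) • stepVal N d (j, !b) = t • stepVal N d (j, b) := by
    rw [stepVal_not, smul_neg, sub_nsmul _ (by omega), stepVal_succ]; abel
  obtain ⟨hlen, hexp⟩ := h.exchange hS (R := (j + 1, b) :: List.replicate (d - t) (j, !b))
    (by simp [hj]; omega)
    (by simpa only [List.map_cons, List.sum_cons, List.map_replicate, List.sum_replicate]
      using hsum)
  simp only [List.length_cons, List.length_replicate] at hlen hexp
  obtain ⟨s, hs⟩ : ∃ s, t = s + 1 := ⟨d / 2, rfl⟩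
  have hds : d - t = s := by omega
  have := hexp (by omega)
  simp only [expSum, List.map_cons, List.map_replicate, List.sum_cons, List.sum_replicate,
    smul_eq_mul] at this
  rw [hds, hs] at this
  nlinarith

end IsExtremalSteps

end Steps

/-- Improved shortest-path lemma for G(rd^m, d): a shortest path from 0 to v can be
chosen with no cancelling pair ±d^j, at most ⌊d/2⌋ steps of each sign ±d^j for
j ≤ m-1, and at most ⌊r/2⌋ steps of each sign ±d^m. -/
theorem exists_shortest_path_steps (r d m : ℕ) (hd : 2 ≤ d) (hr : 1 ≤ r) (hm : 1 ≤ m)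
    (v : ZMod (r * d ^ m)) :
    ∃ L : List (ℕ × Bool),
      (∀ p ∈ L, p.1 < Nat.clog d (r * d ^ m)) ∧
      (L.map (stepVal (r * d ^ m) d)).sum = v ∧
      L.length = (recCirc (r * d ^ m) d).dist 0 v ∧
      (∀ j, ¬((j, true) ∈ L ∧ (j, false) ∈ L)) ∧
      (∀ j ≤ m - 1, L.count (j, true) ≤ d / 2 ∧ L.count (j, false) ≤ d / 2) ∧
      L.count (m, true) ≤ r / 2 ∧ L.count (m, false) ≤ r / 2 := by
  have hdm : d ^ m ≤ r * d ^ m := Nat.le_mul_of_pos_left _ hr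
  have hN : 1 < r * d ^ m := lt_of_lt_of_le (Nat.one_lt_pow (by omega) hd) hdm
  obtain ⟨L, hL⟩ := exists_isExtremalSteps hd hN v
  have hrm : r • ((d : ZMod (r * d ^ m)) ^ m) = 0 := by
    rw [nsmul_eq_mul, ← Nat.cast_pow, ← Nat.cast_mul, ZMod.natCast_self]
  have hlow : ∀ j ≤ m - 1, ∀ b, L.count (j, b) ≤ d / 2 := by
    intro j hj b
    rcases lt_or_ge (j + 1) (Nat.clog d (r * d ^ m)) with hjc | hjc
    · exact hL.count_le_of_succ_lt_clog hjc b
    · have hpow : d ^ (j + 1) = r * d ^ m := le_antisymm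
        ((Nat.pow_le_pow_right (by omega) (by omega)).trans hdm)
        ((Nat.clog_le_iff_le_pow hd).1 hjc)
      refine hL.count_le_of_nsmul_eq_zero (by omega) ?_ b
      rw [nsmul_eq_mul, ← Nat.cast_pow, ← Nat.cast_mul, ← pow_succ', hpow, ZMod.natCast_self]
  exact ⟨L, hL.lt_clog, hL.sum_eq, hL.length_eq_dist, hL.not_mem_and_mem,
    fun j hj => ⟨hlow j hj true, hlow j hj false⟩, hL.count_le_of_nsmul_eq_zero hr hrm true,
    hL.count_le_of_nsmul_eq_zero hr hrm false⟩
end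

section
/- Let P = b₁,...,b_t be a shortest path from 0 to v in G(rd^m,d), written as a sequence of steps each equal to +d^j or −d^j. Then P does not contain both a step +d^j and a step −d^j for any j, and for each j, P contains fewer than d steps equal to +d^j and fewer than d steps equal to −d^j. -/
open List

section Steps

variable {N d : ℕ}

theorem one_lt_of_lt_clog {j : ℕ} (hj : j < Nat.clog d N) : 1 < d := by
  by_contra! h
  rw [Nat.clog_of_left_le_one h] at hj
  omega

theorem natCast_pow_ne_zero_of_lt_clog {j : ℕ} (hj : j < Nat.clog d N) :
    (d : ZMod N) ^ j ≠ 0 := by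
  have hd := one_lt_of_lt_clog hj
  rw [← Nat.cast_pow, Ne, ZMod.natCast_eq_zero_iff]
  exact Nat.not_dvd_of_pos_of_lt (pow_pos (by omega) j) ((Nat.lt_clog_iff_pow_lt hd).mp hj)

theorem recCirc_adj_add_stepVal {j : ℕ} (hj : j < Nat.clog d N) (b : Bool) (a : ZMod N) :
    (recCirc N d).Adj a (a + stepVal N d (j, b)) := by
  have hne := natCast_pow_ne_zero_of_lt_clog hj
  rw [recCirc, SimpleGraph.circulantGraph_adj]
  cases b <;> simp [stepVal, hne] <;> [left; right] <;> exact ⟨j, hj, rfl⟩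

theorem exists_walk_stepVal_sum (L : List (ℕ × Bool)) (hL : ∀ p ∈ L, p.1 < Nat.clog d N)
    (a : ZMod N) :
    ∃ w : (recCirc N d).Walk a (a + (L.map (stepVal N d)).sum), w.length = L.length := by
  induction L generalizing a with
  | nil => exact ⟨.copy .nil rfl (by simp), by simp⟩
  | cons p L ih =>
    obtain ⟨w, hw⟩ := ih (fun q hq => hL q (mem_cons_of_mem p hq)) (a + stepVal N d p)
    refine ⟨.copy (.cons (recCirc_adj_add_stepVal (hL p mem_cons_self) p.2 a) w) rfl
      (by simp [add_assoc]), by simp [hw]⟩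

theorem recCirc_dist_le_length (L : List (ℕ × Bool)) (hL : ∀ p ∈ L, p.1 < Nat.clog d N) :
    (recCirc N d).dist 0 (L.map (stepVal N d)).sum ≤ L.length := by
  obtain ⟨w, hw⟩ := exists_walk_stepVal_sum L hL 0
  simpa [hw] using SimpleGraph.dist_le (w.copy rfl (zero_add _))

theorem not_subperm_of_length_eq_dist {v : ZMod N} {L s t : List (ℕ × Bool)}
    (hL : ∀ p ∈ L, p.1 < Nat.clog d N) (hsum : (L.map (stepVal N d)).sum = v)
    (hlen : L.length = (recCirc N d).dist 0 v) (ht : ∀ p ∈ t, p.1 < Nat.clog d N)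
    (hts : (t.map (stepVal N d)).sum = (s.map (stepVal N d)).sum) (hlt : t.length < s.length) :
    ¬ s <+~ L := by
  intro hs
  have hperm : s ++ L.diff s ~ L := subperm_append_diff_self_of_count_le (subperm_ext_iff.mp hs)
  have hsum' : ((t ++ L.diff s).map (stepVal N d)).sum = v := by
    rw [← hsum, ← (hperm.map _).sum_eq]
    simp [hts]
  have hle := recCirc_dist_le_length (t ++ L.diff s) fun p hp =>
    (mem_append.mp hp).elim (ht p) fun hp => hL p (diff_subset L s hp)
  have := hperm.length_eq
  simp only [length_append, hsum'] at hle this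
  omega

end Steps

section TopLevel

variable {r d m : ℕ}

theorem pow_succ_eq_mod_mul_pow {j : ℕ} (hd : 1 < d) (hr : 0 < r)
    (h : r * d ^ m ≤ d ^ (j + 1)) :
    (d : ZMod (r * d ^ m)) ^ (j + 1) = ((d % r : ℕ) : ZMod (r * d ^ m)) * (d : ZMod _) ^ j := by
  rcases le_or_gt m j with hmj | hjm
  · have hzero : ((r * d ^ j : ℕ) : ZMod (r * d ^ m)) = 0 :=
      (ZMod.natCast_eq_zero_iff _ _).mpr (mul_dvd_mul_left r (pow_dvd_pow d hmj))
    have hdiv : ((d % r + r * (d / r) : ℕ) : ZMod (r * d ^ m)) = d := by rw [Nat.mod_add_div]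
    push_cast at hzero hdiv
    linear_combination
      (-(d : ZMod (r * d ^ m)) ^ j) * hdiv + ((d / r : ℕ) : ZMod (r * d ^ m)) * hzero
  · have hm : m = j + 1 := by
      by_contra hm
      have := Nat.pow_lt_pow_right hd (show j + 1 < m by omega)
      have := Nat.le_mul_of_pos_left (d ^ m) hr
      omega
    subst hm
    obtain rfl : r = 1 :=
      le_antisymm (Nat.le_of_mul_le_mul_right (by simpa using h) (by positivity)) hr
    rw [Nat.mod_one, Nat.cast_zero, zero_mul, one_mul, ← Nat.cast_pow, ZMod.natCast_self]

theorem exists_mul_pow_eq_pow_succ (hrd : r < d) {j : ℕ} (hj : j < Nat.clog d (r * d ^ m)) :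
    ∃ k < d, ∃ i < Nat.clog d (r * d ^ m),
      (k : ZMod (r * d ^ m)) * (d : ZMod _) ^ i = (d : ZMod _) ^ (j + 1) := by
  have hd := one_lt_of_lt_clog hj
  by_cases hj1 : j + 1 < Nat.clog d (r * d ^ m)
  · exact ⟨1, hd, j + 1, hj1, by simp⟩
  rcases Nat.eq_zero_or_pos r with rfl | hr
  · simp at hj
  refine ⟨d % r, (Nat.mod_lt d hr).trans hrd, j, hj, ?_⟩
  rw [Nat.lt_clog_iff_pow_lt hd, not_lt] at hj1
  exact (pow_succ_eq_mod_mul_pow hd hr hj1).symm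

theorem exists_short_stepVal_eq_nsmul (hrd : r < d) {j : ℕ} (hj : j < Nat.clog d (r * d ^ m))
    (b : Bool) :
    ∃ t : List (ℕ × Bool), (∀ p ∈ t, p.1 < Nat.clog d (r * d ^ m)) ∧
      (t.map (stepVal (r * d ^ m) d)).sum = d • stepVal (r * d ^ m) d (j, b) ∧ t.length < d := by
  obtain ⟨k, hk, i, hi, hki⟩ := exists_mul_pow_eq_pow_succ hrd hj
  refine ⟨replicate k (i, b), fun p hp => (eq_of_mem_replicate hp) ▸ hi, ?_, by simpa⟩
  cases b <;> simp [stepVal, hki, pow_succ']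

end TopLevel

theorem shortest_path_steps_basic_general (r d m : ℕ) (hrd : r < d)
    (v : ZMod (r * d ^ m)) (L : List (ℕ × Bool))
    (hsteps : ∀ p ∈ L, p.1 < Nat.clog d (r * d ^ m))
    (hsum : (L.map (stepVal (r * d ^ m) d)).sum = v)
    (hlen : L.length = (recCirc (r * d ^ m) d).dist 0 v) :
    (∀ j, ¬((j, true) ∈ L ∧ (j, false) ∈ L)) ∧
    (∀ j, L.count (j, true) < d ∧ L.count (j, false) < d) := by
  refine ⟨fun j ⟨hpos, hneg⟩ => ?_, fun j => ?_⟩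
  · refine not_subperm_of_length_eq_dist (s := [(j, true), (j, false)]) (t := [])
      hsteps hsum hlen (by simp) (by simp [stepVal]) (by simp) ?_
    exact Nodup.subperm (by simp) (by simp [hpos, hneg])
  · have hcount (b : Bool) : L.count (j, b) < d := by
      by_contra! h
      have hj : j < Nat.clog d (r * d ^ m) := hsteps (j, b) (count_pos_iff.mp (by omega))
      obtain ⟨t, ht, hts, hlt⟩ := exists_short_stepVal_eq_nsmul hrd hj b
      refine not_subperm_of_length_eq_dist (s := replicate d (j, b)) hsteps hsum hlen ht
        (by simpa [nsmul_eq_mul] using hts) (by simpa) (replicate_sublist_iff.mpr h).subperm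
    exact ⟨hcount true, hcount false⟩

/-- Any shortest path from 0 to v in G(rd^m,d) uses no cancelling pair ±d^j and
fewer than d steps of each sign ±d^j. -/
theorem shortest_path_steps_basic (r d m : ℕ) (hr : 1 ≤ r) (hrd : r < d) (hm : 1 ≤ m)
    (v : ZMod (r * d ^ m)) (L : List (ℕ × Bool))
    (hsteps : ∀ p ∈ L, p.1 < Nat.clog d (r * d ^ m))
    (hsum : (L.map (stepVal (r * d ^ m) d)).sum = v)
    (hlen : L.length = (recCirc (r * d ^ m) d).dist 0 v) :
    (∀ j, ¬((j, true) ∈ L ∧ (j, false) ∈ L)) ∧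
    (∀ j, L.count (j, true) < d ∧ L.count (j, false) < d) :=
  shortest_path_steps_basic_general r d m hrd v L hsteps hsum hlen
end
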